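/- Let μ₀, μ₁ ∈ P(S¹) be probability measures with densities satisfying μ₁ = μ₀ + Σ_{k≥1}(a_k cos(kθ) + b_k sin(kθ)), and suppose ν = μ₀ − Σ_{k≥1}((a_k cos)⁻(kθ) + (b_k sin)⁻(kθ)) is a non-negative measure. Then W₂²(μ₀, μ₁) ≤ Σ_{k≥1} (2π²/k²)(|a_k| + |b_k|). -/

import Mathlib

open MeasureTheory Set Real

/-- The squared geodesic cost on the circle parametrized by `[0, 2π)`. -/
noncomputable def circleCost (θ φ : ℝ) : ℝ :=
  (min |θ - φ| (2 * π - |θ - φ|)) ^ 2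

/-- The quadratic Wasserstein cost on the circle (as infimum over couplings of measures on
the parametrizing interval). -/
noncomputable def W2sqCircle (μ ν : Measure ℝ) : ENNReal :=
  sInf {c | ∃ γ : Measure (ℝ × ℝ), γ.map Prod.fst = μ ∧ γ.map Prod.snd = ν ∧
    c = ∫⁻ p, ENNReal.ofReal (circleCost p.1 p.2) ∂γ}

/-!
The coupling is explicit. The common part `ν` of `μ₀` and `μ₁` stays in place. For `k ≥ 1`,
rotating the circle by half a wavelength `π / k` flips the signs of `cos kθ` and `sin kθ`, so it
carries `(aₖ cos kθ)⁻ + (bₖ sin kθ)⁻` onto `(aₖ cos kθ)⁺ + (bₖ sin kθ)⁺`. Every point moves by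
exactly `π / k ≤ π`, and the mass moved is `2 (|aₖ| + |bₖ|)`, so this costs
`(2π² / k²) (|aₖ| + |bₖ|)`. Since `μ₀ = ν + Σₖ (…)⁻` and `μ₁ = ν + Σₖ (…)⁺`, the sum of these
couplings couples `μ₀` with `μ₁`.
-/

open scoped ENNReal

lemma map_withDensity_comp {α β : Type*} [MeasurableSpace α] [MeasurableSpace β] (μ : Measure α)
    {T : α → β} (hT : Measurable T) {g : β → ℝ≥0∞} (hg : Measurable g) :
    (μ.withDensity (g ∘ T)).map T = (μ.map T).withDensity g := by
  ext s hs
  rw [Measure.map_apply hT hs, withDensity_apply _ (hT hs), withDensity_apply _ hs,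
    setLIntegral_map hs hg hT]
  rfl

lemma withDensity_restrict_restrict_of_subset {α : Type*} [MeasurableSpace α] {μ : Measure α}
    {s t : Set α} (ht : MeasurableSet t) (hts : t ⊆ s) (f : α → ℝ≥0∞) :
    ((μ.restrict s).withDensity f).restrict t = (μ.restrict t).withDensity f := by
  rw [restrict_withDensity ht, Measure.restrict_restrict ht, inter_eq_self_of_subset_left hts]

lemma map_add_const_volume_restrict_Ico (u v c : ℝ) :
    (volume.restrict (Ico u v)).map (· + c) = volume.restrict (Ico (u + c) (v + c)) := by
  have h := Measure.restrict_map (μ := volume) (measurable_add_const c)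
    (measurableSet_Ico (a := u + c) (b := v + c))
  rwa [map_add_right_eq_self, preimage_add_const_Ico, add_sub_cancel_right,
    add_sub_cancel_right, eq_comm] at h

lemma map_add_const_withDensity_restrict_Ico {f g : ℝ → ℝ≥0∞} {c : ℝ} (hg : Measurable g)
    (hfg : ∀ θ, g (θ + c) = f θ) (u v : ℝ) :
    ((volume.restrict (Ico u v)).withDensity f).map (· + c) =
      (volume.restrict (Ico (u + c) (v + c))).withDensity g := by
  rw [← map_add_const_volume_restrict_Ico, ← map_withDensity_comp _ (measurable_add_const c) hg]
  congr
  exact funext fun θ => (hfg θ).symm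

lemma sum_withDensity_ofReal {α : Type*} [MeasurableSpace α] {μ : Measure α} {f : ℕ → α → ℝ}
    (hf : ∀ k, Measurable (f k)) (hf₀ : ∀ k x, 0 ≤ f k x) (hfs : ∀ x, Summable (f · x)) :
    Measure.sum (fun k => μ.withDensity fun x => ENNReal.ofReal (f k x)) =
      μ.withDensity fun x => ENNReal.ofReal (∑' k, f k x) := by
  rw [← withDensity_tsum fun k => (hf k).ennreal_ofReal]
  congr with x
  rw [ENNReal.tsum_apply, ENNReal.ofReal_tsum_of_nonneg (hf₀ · x) (hfs x)]

lemma withDensity_ofReal_add {α : Type*} [MeasurableSpace α] {μ : Measure α} {f g : α → ℝ}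
    (hg : Measurable g) (hf₀ : ∀ x, 0 ≤ f x) (hg₀ : ∀ x, 0 ≤ g x) :
    μ.withDensity (fun x => ENNReal.ofReal (f x + g x)) =
      μ.withDensity (fun x => ENNReal.ofReal (f x)) +
        μ.withDensity (fun x => ENNReal.ofReal (g x)) := by
  simp only [ENNReal.ofReal_add (hf₀ _) (hg₀ _)]
  exact withDensity_add_right _ hg.ennreal_ofReal

lemma map_diag_add_sum {α ι : Type*} [MeasurableSpace α] {p : α × α → α}
    (hp : Measurable p) (hpd : ∀ x, p (x, x) = x) (ν : Measure α) (γ : ι → Measure (α × α)) :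
    (ν.map (fun x => (x, x)) + Measure.sum γ).map p = ν + Measure.sum fun i => (γ i).map p := by
  rw [Measure.map_add _ _ hp, Measure.map_map hp (by fun_prop : Measurable fun x : α => (x, x)),
    Measure.map_sum hp.aemeasurable]
  simp only [Function.comp_def, hpd, Measure.map_id']

/-- The rotation of `[0, 2π)` by `s` modulo `2π`, as a coupling of `ρ` with its image. -/
noncomputable def rotationCoupling (s : ℝ) (ρ : Measure ℝ) : Measure (ℝ × ℝ) :=
  (ρ.restrict (Ico 0 (2 * π - s))).map (fun θ => (θ, θ + s)) +
    (ρ.restrict (Ico (2 * π - s) (2 * π))).map (fun θ => (θ, θ + (s - 2 * π)))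

section rotationCoupling

variable {s : ℝ}

lemma rotationCoupling_map_fst (hs₀ : 0 ≤ s) (hs : s ≤ 2 * π) (ρ : Measure ℝ) :
    (rotationCoupling s ρ).map Prod.fst = ρ.restrict (Ico 0 (2 * π)) := by
  rw [rotationCoupling, Measure.map_add _ _ measurable_fst,
    Measure.map_map measurable_fst (by fun_prop), Measure.map_map measurable_fst (by fun_prop)]
  simp only [Function.comp_def, Measure.map_id']
  rw [← Measure.restrict_union Ico_disjoint_Ico_same measurableSet_Ico,
    Ico_union_Ico_eq_Ico (by linarith) (by linarith)]

lemma rotationCoupling_withDensity_map_fst (hs₀ : 0 ≤ s) (hs : s ≤ 2 * π) (f : ℝ → ℝ≥0∞) :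
    (rotationCoupling s ((volume.restrict (Ico 0 (2 * π))).withDensity f)).map Prod.fst =
      (volume.restrict (Ico 0 (2 * π))).withDensity f := by
  rw [rotationCoupling_map_fst hs₀ hs, withDensity_restrict_restrict_of_subset measurableSet_Ico
    subset_rfl]

lemma rotationCoupling_withDensity_map_snd (hs₀ : 0 ≤ s) (hs : s ≤ 2 * π) {f g : ℝ → ℝ≥0∞}
    (hg : Measurable g) (hg_per : Function.Periodic g (2 * π)) (hfg : ∀ θ, g (θ + s) = f θ) :
    (rotationCoupling s ((volume.restrict (Ico 0 (2 * π))).withDensity f)).map Prod.snd =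
      (volume.restrict (Ico 0 (2 * π))).withDensity g := by
  have hfg' : ∀ θ, g (θ + (s - 2 * π)) = f θ := fun θ => by
    rw [← add_sub_assoc, hg_per.sub_eq, hfg]
  rw [rotationCoupling, Measure.map_add _ _ measurable_snd,
    Measure.map_map measurable_snd (by fun_prop), Measure.map_map measurable_snd (by fun_prop)]
  simp only [Function.comp_def]
  rw [withDensity_restrict_restrict_of_subset measurableSet_Ico
      (Ico_subset_Ico_right (by linarith)),
    withDensity_restrict_restrict_of_subset measurableSet_Ico (Ico_subset_Ico_left (by linarith)),
    map_add_const_withDensity_restrict_Ico hg hfg, map_add_const_withDensity_restrict_Ico hg hfg',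
    ← withDensity_add_measure, add_comm, zero_add, sub_add_cancel,
    show 2 * π - s + (s - 2 * π) = 0 by ring, show 2 * π + (s - 2 * π) = s by ring,
    ← Measure.restrict_union Ico_disjoint_Ico_same measurableSet_Ico,
    Ico_union_Ico_eq_Ico hs₀ (by linarith)]

lemma circleCost_self (θ : ℝ) : circleCost θ θ = 0 := by
  simp [circleCost, pi_pos.le]

lemma circleCost_self_add (hs₀ : 0 ≤ s) (hs : s ≤ π) (θ : ℝ) : circleCost θ (θ + s) = s ^ 2 := by
  rw [circleCost, sub_add_cancel_left, abs_neg, abs_of_nonneg hs₀, min_eq_left (by linarith)]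

lemma circleCost_self_add_sub_two_pi (hs₀ : 0 ≤ s) (hs : s ≤ π) (θ : ℝ) :
    circleCost θ (θ + (s - 2 * π)) = s ^ 2 := by
  rw [circleCost, sub_add_cancel_left, neg_sub, abs_of_nonneg (by linarith), sub_sub_cancel,
    min_eq_right (by linarith)]

lemma measurable_circleCost : Measurable fun p : ℝ × ℝ => circleCost p.1 p.2 := by
  unfold circleCost
  fun_prop

lemma lintegral_circleCost_rotationCoupling (hs₀ : 0 ≤ s) (hs : s ≤ π) (ρ : Measure ℝ) :
    ∫⁻ p, ENNReal.ofReal (circleCost p.1 p.2) ∂rotationCoupling s ρ =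
      ENNReal.ofReal (s ^ 2) * ρ (Ico 0 (2 * π)) := by
  have hcost := measurable_circleCost.ennreal_ofReal
  rw [rotationCoupling, lintegral_add_measure, lintegral_map hcost (by fun_prop),
    lintegral_map hcost (by fun_prop)]
  simp only [circleCost_self_add hs₀ hs, circleCost_self_add_sub_two_pi hs₀ hs, lintegral_const,
    Measure.restrict_apply_univ]
  rw [← mul_add, ← measure_union Ico_disjoint_Ico_same measurableSet_Ico,
    Ico_union_Ico_eq_Ico (by linarith) (by linarith)]

end rotationCoupling

lemma Function.Periodic.intervalIntegral_comp_nat_mul {F : ℝ → ℝ} {T : ℝ}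
    (hF : Function.Periodic F T) (hF_int : ∀ t₁ t₂, IntervalIntegrable F volume t₁ t₂)
    {k : ℕ} (hk : k ≠ 0) :
    ∫ x in 0..T, F (k * x) = ∫ x in 0..T, F x := by
  have hk' : (k : ℝ) ≠ 0 := Nat.cast_ne_zero.mpr hk
  have hkT : (k : ℝ) * T = 0 + (k : ℤ) • T := by simp
  rw [intervalIntegral.integral_comp_mul_left F hk', mul_zero, hkT,
    hF.intervalIntegral_add_zsmul_eq _ _ hF_int, zero_add]
  simp [hk']

lemma Function.Antiperiodic.intervalIntegral_max_neg_zero {w : ℝ → ℝ} {T : ℝ}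
    (hw : Function.Antiperiodic w T) (hw_cont : Continuous w) :
    ∫ x in 0..2 * T, max (-w x) 0 = ∫ x in 0..T, |w x| := by
  have hint : ∀ t₁ t₂, IntervalIntegrable (fun x => max (-w x) 0) volume t₁ t₂ :=
    fun _ _ => (by fun_prop : Continuous fun x => max (-w x) 0).intervalIntegrable _ _
  have hshift : ∫ x in T..2 * T, max (-w x) 0 = ∫ x in 0..T, max (w x) 0 := by
    have := intervalIntegral.integral_comp_add_right (fun x => max (-w x) 0) T (a := 0) (b := T)
    rw [zero_add, ← two_mul] at this
    simp only [← this, hw _, neg_neg]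
  rw [← intervalIntegral.integral_add_adjacent_intervals (hint 0 T) (hint T _), hshift,
    ← intervalIntegral.integral_add (hint 0 T)
      ((by fun_prop : Continuous fun x => max (w x) 0).intervalIntegrable _ _)]
  simp only [add_comm (max (-w _) 0), max_zero_add_max_neg_zero_eq_abs_self]

lemma lintegral_Ico_ofReal_eq_intervalIntegral {F : ℝ → ℝ} (hF : Continuous F)
    (hF₀ : ∀ x, 0 ≤ F x) {a b : ℝ} (hab : a ≤ b) :
    ∫⁻ x in Ico a b, ENNReal.ofReal (F x) = ENNReal.ofReal (∫ x in a..b, F x) := by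
  rw [intervalIntegral.integral_of_le hab, setLIntegral_congr Ico_ae_eq_Ioc,
    ofReal_integral_eq_lintegral_ofReal hF.integrableOn_Ioc (.of_forall hF₀)]

lemma integral_abs_sin_zero_pi : ∫ x in 0..π, |sin x| = 2 := by
  rw [intervalIntegral.integral_congr fun x hx => abs_of_nonneg <|
    sin_nonneg_of_nonneg_of_le_pi (uIcc_of_le pi_pos.le ▸ hx).1 (uIcc_of_le pi_pos.le ▸ hx).2,
    integral_sin]
  norm_num

lemma integral_abs_cos_zero_pi : ∫ x in 0..π, |cos x| = 2 := by
  have hper : Function.Periodic (fun x => |cos x|) π := fun x => by simp [cos_antiperiodic x]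
  have := hper.intervalIntegral_add_eq 0 (-(π / 2))
  rw [zero_add, show -(π / 2) + π = π / 2 by ring] at this
  rw [this, intervalIntegral.integral_congr fun x hx => abs_of_nonneg <|
    cos_nonneg_of_mem_Icc (uIcc_of_le (by linarith [pi_pos] : -(π / 2) ≤ π / 2) ▸ hx), integral_cos]
  norm_num

lemma lintegral_Ico_max_neg_mul_comp_nat_mul {w : ℝ → ℝ} (hw : Function.Antiperiodic w π)
    (hw_cont : Continuous w) (c : ℝ) {k : ℕ} (hk : k ≠ 0) :
    ∫⁻ θ in Ico 0 (2 * π), ENNReal.ofReal (max (-(c * w (k * θ))) 0) =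
      ENNReal.ofReal (|c| * ∫ x in 0..π, |w x|) := by
  have hcw : Function.Antiperiodic (fun x => c * w x) π := fun x => by simp only [hw x, mul_neg]
  have hF : Function.Periodic (fun x => max (-(c * w x)) 0) (2 * π) := fun x => by
    simp only [hcw.periodic_two_mul x]
  rw [lintegral_Ico_ofReal_eq_intervalIntegral (by fun_prop) (fun _ => le_max_right _ _)
      (by positivity),
    hF.intervalIntegral_comp_nat_mul
      (fun _ _ => Continuous.intervalIntegrable (by fun_prop) _ _) hk,
    hcw.intervalIntegral_max_neg_zero (by fun_prop)]
  simp only [abs_mul, intervalIntegral.integral_const_mul]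

noncomputable def fourierNegPart (a b : ℕ → ℝ) (k : ℕ) (θ : ℝ) : ℝ :=
  max (-(a k * Real.cos (k * θ))) 0 + max (-(b k * Real.sin (k * θ))) 0

/-- `(aₖ cos kθ)⁺ + (bₖ sin kθ)⁺`, written as the negative part `(-aₖ cos kθ)⁻ + (-bₖ sin kθ)⁻`
so that the lemmas about `fourierNegPart` apply to it. -/
noncomputable def fourierPosPart (a b : ℕ → ℝ) : ℕ → ℝ → ℝ :=
  fourierNegPart (-a) (-b)

section fourier

variable {a b : ℕ → ℝ}

lemma fourierNegPart_nonneg (k : ℕ) (θ : ℝ) : 0 ≤ fourierNegPart a b k θ :=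
  add_nonneg (le_max_right _ _) (le_max_right _ _)

lemma fourierNegPart_le (k : ℕ) (θ : ℝ) : fourierNegPart a b k θ ≤ |a k| + |b k| := by
  have key : ∀ c y : ℝ, |y| ≤ 1 → max (-(c * y)) 0 ≤ |c| := fun c y hy =>
    max_le ((neg_le_abs _).trans (by rw [abs_mul]; exact mul_le_of_le_one_right (abs_nonneg c) hy))
      (abs_nonneg c)
  exact add_le_add (key _ _ (abs_cos_le_one _)) (key _ _ (abs_sin_le_one _))

lemma continuous_fourierNegPart (k : ℕ) : Continuous (fourierNegPart a b k) := by
  unfold fourierNegPart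
  fun_prop

lemma fourierPosPart_sub_fourierNegPart (k : ℕ) (θ : ℝ) :
    fourierPosPart a b k θ - fourierNegPart a b k θ = a k * cos (k * θ) + b k * sin (k * θ) := by
  simp only [fourierPosPart, fourierNegPart, Pi.neg_apply, neg_mul, neg_neg]
  linarith [max_zero_sub_max_neg_zero_eq_self (a k * cos (k * θ)),
    max_zero_sub_max_neg_zero_eq_self (b k * sin (k * θ))]

lemma fourierPosPart_periodic (k : ℕ) : Function.Periodic (fourierPosPart a b k) (2 * π) :=
  fun θ => by simp only [fourierPosPart, fourierNegPart, mul_add,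
    cos_add_nat_mul_two_pi, sin_add_nat_mul_two_pi]

lemma fourierPosPart_add_pi_div (ha₀ : a 0 = 0) (k : ℕ) (θ : ℝ) :
    fourierPosPart a b k (θ + π / k) = fourierNegPart a b k θ := by
  rcases eq_or_ne k 0 with rfl | hk
  · simp [fourierPosPart, fourierNegPart, ha₀]
  · have : (k : ℝ) * (θ + π / k) = k * θ + π := by field_simp
    simp only [fourierPosPart, fourierNegPart, Pi.neg_apply, this, cos_add_pi, sin_add_pi,
      neg_mul, mul_neg, neg_neg]

lemma lintegral_fourierNegPart {k : ℕ} (hk : k ≠ 0) :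
    ∫⁻ θ in Ico 0 (2 * π), ENNReal.ofReal (fourierNegPart a b k θ) =
      ENNReal.ofReal (2 * (|a k| + |b k|)) := by
  simp only [fourierNegPart, ENNReal.ofReal_add (le_max_right _ _) (le_max_right _ _)]
  rw [lintegral_add_left (by fun_prop),
    lintegral_Ico_max_neg_mul_comp_nat_mul cos_antiperiodic continuous_cos _ hk,
    lintegral_Ico_max_neg_mul_comp_nat_mul sin_antiperiodic continuous_sin _ hk,
    integral_abs_cos_zero_pi, integral_abs_sin_zero_pi, ← ENNReal.ofReal_add (by positivity)
      (by positivity)]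
  congr 1
  ring

variable (hsum : Summable fun k => |a k| + |b k|)
include hsum

lemma summable_fourierNegPart (θ : ℝ) : Summable (fourierNegPart a b · θ) :=
  hsum.of_nonneg_of_le (fourierNegPart_nonneg · θ) (fourierNegPart_le · θ)

lemma continuous_tsum_fourierNegPart : Continuous fun θ => ∑' k, fourierNegPart a b k θ :=
  continuous_tsum continuous_fourierNegPart hsum fun k θ => by
    rw [Real.norm_of_nonneg (fourierNegPart_nonneg k θ)]
    exact fourierNegPart_le k θ

lemma tsum_fourier_eq_sub (θ : ℝ) :
    ∑' k : ℕ, (a k * cos (k * θ) + b k * sin (k * θ)) =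
      ∑' k, fourierPosPart a b k θ - ∑' k, fourierNegPart a b k θ := by
  have hsum' : Summable fun k => |(-a) k| + |(-b) k| := by simpa using hsum
  simp only [← fourierPosPart_sub_fourierNegPart]
  exact (summable_fourierNegPart hsum' θ).tsum_sub (summable_fourierNegPart hsum θ)

end fourier

noncomputable def fourierCoupling (a b : ℕ → ℝ) (k : ℕ) : Measure (ℝ × ℝ) :=
  rotationCoupling (π / k) ((volume.restrict (Ico 0 (2 * π))).withDensity
    fun θ => ENNReal.ofReal (fourierNegPart a b k θ))

section fourierCoupling

variable {a b : ℕ → ℝ} (k : ℕ)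

lemma pi_div_natCast_nonneg : 0 ≤ π / k := by positivity

lemma pi_div_natCast_le_pi : π / k ≤ π := by
  rcases eq_or_ne k 0 with rfl | hk
  · simp [pi_pos.le]
  · exact div_le_self pi_pos.le (Nat.one_le_cast.mpr (Nat.pos_of_ne_zero hk))

lemma fourierCoupling_map_fst :
    (fourierCoupling a b k).map Prod.fst = (volume.restrict (Ico 0 (2 * π))).withDensity
      fun θ => ENNReal.ofReal (fourierNegPart a b k θ) :=
  rotationCoupling_withDensity_map_fst (pi_div_natCast_nonneg k)
    ((pi_div_natCast_le_pi k).trans (by linarith [pi_pos])) _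

lemma fourierCoupling_map_snd (ha₀ : a 0 = 0) :
    (fourierCoupling a b k).map Prod.snd = (volume.restrict (Ico 0 (2 * π))).withDensity
      fun θ => ENNReal.ofReal (fourierPosPart a b k θ) :=
  rotationCoupling_withDensity_map_snd (pi_div_natCast_nonneg k)
    ((pi_div_natCast_le_pi k).trans (by linarith [pi_pos]))
    (continuous_fourierNegPart k).measurable.ennreal_ofReal
    (fun θ => by simp only [fourierPosPart_periodic k θ])
    (fun θ => by simp only [fourierPosPart_add_pi_div ha₀])

lemma lintegral_circleCost_fourierCoupling :
    ∫⁻ p, ENNReal.ofReal (circleCost p.1 p.2) ∂fourierCoupling a b k =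
      ENNReal.ofReal (2 * π ^ 2 / (k : ℝ) ^ 2 * (|a k| + |b k|)) := by
  rw [fourierCoupling, lintegral_circleCost_rotationCoupling (pi_div_natCast_nonneg k)
    (pi_div_natCast_le_pi k), withDensity_apply _ measurableSet_Ico,
    Measure.restrict_restrict measurableSet_Ico, inter_self]
  rcases eq_or_ne k 0 with rfl | hk
  · simp
  · rw [lintegral_fourierNegPart hk, ← ENNReal.ofReal_mul (by positivity)]
    congr 1
    field_simp

end fourierCoupling

lemma Summable.const_div_natCast_sq_mul {u : ℕ → ℝ} (hu : Summable u) (hu₀ : ∀ k, 0 ≤ u k)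
    {C : ℝ} (hC : 0 ≤ C) : Summable fun k : ℕ => C / (k : ℝ) ^ 2 * u k := by
  refine (hu.mul_left C).of_nonneg_of_le (fun k => by have := hu₀ k; positivity) fun k => ?_
  gcongr
  · exact hu₀ k
  rcases eq_or_ne k 0 with rfl | hk
  · simpa using hC
  · exact div_le_self hC (one_le_pow₀ (Nat.one_le_cast.mpr (Nat.pos_of_ne_zero hk)))

section decomposition

variable {μ : Measure ℝ} {p₀ : ℝ → ℝ} {a b : ℕ → ℝ} (hsum : Summable fun k => |a k| + |b k|)
  (hν : ∀ θ, 0 ≤ p₀ θ - ∑' k, fourierNegPart a b k θ)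
include hsum hν

lemma withDensity_eq_add_sum_fourierNegPart :
    μ.withDensity (fun θ => ENNReal.ofReal (p₀ θ)) =
      μ.withDensity (fun θ => ENNReal.ofReal (p₀ θ - ∑' k, fourierNegPart a b k θ)) +
        Measure.sum fun k => μ.withDensity fun θ => ENNReal.ofReal (fourierNegPart a b k θ) := by
  rw [sum_withDensity_ofReal (continuous_fourierNegPart · |>.measurable) fourierNegPart_nonneg
      (summable_fourierNegPart hsum),
    ← withDensity_ofReal_add (continuous_tsum_fourierNegPart hsum).measurable hν
      (fun θ => tsum_nonneg (fourierNegPart_nonneg · θ))]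
  simp only [sub_add_cancel]

lemma withDensity_eq_add_sum_fourierPosPart :
    μ.withDensity (fun θ => ENNReal.ofReal (p₀ θ +
        ∑' k : ℕ, (a k * cos (k * θ) + b k * sin (k * θ)))) =
      μ.withDensity (fun θ => ENNReal.ofReal (p₀ θ - ∑' k, fourierNegPart a b k θ)) +
        Measure.sum fun k => μ.withDensity fun θ => ENNReal.ofReal (fourierPosPart a b k θ) := by
  have hsum' : Summable fun k => |(-a) k| + |(-b) k| := by simpa using hsum
  simp only [tsum_fourier_eq_sub hsum, fourierPosPart]
  rw [sum_withDensity_ofReal (continuous_fourierNegPart · |>.measurable) fourierNegPart_nonneg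
      (summable_fourierNegPart hsum'),
    ← withDensity_ofReal_add (continuous_tsum_fourierNegPart hsum').measurable hν
      (fun θ => tsum_nonneg (fourierNegPart_nonneg · θ))]
  simp only [sub_add_eq_add_sub, add_sub_assoc]

end decomposition

lemma W2sqCircle_le_lintegral {μ ν : Measure ℝ} (γ : Measure (ℝ × ℝ)) (hγ₁ : γ.map Prod.fst = μ)
    (hγ₂ : γ.map Prod.snd = ν) :
    W2sqCircle μ ν ≤ ∫⁻ p, ENNReal.ofReal (circleCost p.1 p.2) ∂γ :=
  sInf_le ⟨γ, hγ₁, hγ₂, rfl⟩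

lemma lintegral_circleCost_diag_add_sum_fourierCoupling {a b : ℕ → ℝ}
    (hsum : Summable fun k => |a k| + |b k|) (ν : Measure ℝ) :
    ∫⁻ p, ENNReal.ofReal (circleCost p.1 p.2) ∂(ν.map (fun θ => (θ, θ)) +
        Measure.sum (fourierCoupling a b)) =
      ENNReal.ofReal (∑' k : ℕ, 2 * π ^ 2 / (k : ℝ) ^ 2 * (|a k| + |b k|)) := by
  rw [lintegral_add_measure, lintegral_map measurable_circleCost.ennreal_ofReal (by fun_prop),
    lintegral_sum_measure, ENNReal.ofReal_tsum_of_nonneg (fun k => by positivity)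
      (hsum.const_div_natCast_sq_mul (fun k => by positivity) (by positivity))]
  simp only [circleCost_self, ENNReal.ofReal_zero, lintegral_zero, zero_add,
    lintegral_circleCost_fourierCoupling]

theorem W2sq_circle_frequency_sensitivity_general (p₀ : ℝ → ℝ) (a b : ℕ → ℝ)
    (ha0 : a 0 = 0)
    (hsum : Summable (fun k => |a k| + |b k|))
    (μ₀ μ₁ : Measure ℝ)
    (hμ₀ : μ₀ = (volume.restrict (Ico 0 (2 * π))).withDensity
      (fun θ => ENNReal.ofReal (p₀ θ)))
    (hμ₁ : μ₁ = (volume.restrict (Ico 0 (2 * π))).withDensity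
      (fun θ => ENNReal.ofReal (p₀ θ +
        ∑' k : ℕ, (a k * Real.cos (k * θ) + b k * Real.sin (k * θ)))))
    (hν : ∀ θ, 0 ≤ p₀ θ -
      ∑' k : ℕ, (max (-(a k * Real.cos (k * θ))) 0 + max (-(b k * Real.sin (k * θ))) 0)) :
    W2sqCircle μ₀ μ₁ ≤
      ENNReal.ofReal (∑' k : ℕ, 2 * π ^ 2 / (k : ℝ) ^ 2 * (|a k| + |b k|)) := by
  set ν := (volume.restrict (Ico 0 (2 * π))).withDensity
    fun θ => ENNReal.ofReal (p₀ θ - ∑' k, fourierNegPart a b k θ)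
  rw [← lintegral_circleCost_diag_add_sum_fourierCoupling hsum ν]
  refine W2sqCircle_le_lintegral _ ?_ ?_
  · rw [map_diag_add_sum measurable_fst (fun _ => rfl), hμ₀,
      withDensity_eq_add_sum_fourierNegPart hsum hν]
    simp only [fourierCoupling_map_fst, ν]
  · rw [map_diag_add_sum measurable_snd (fun _ => rfl), hμ₁,
      withDensity_eq_add_sum_fourierPosPart hsum hν]
    simp only [fourierCoupling_map_snd _ ha0, ν]

/-- Frequency-sensitivity of `W₂` on the circle: if `μ₁ = μ₀ + Σ_{k≥1}(a_k cos kθ + b_k sin kθ)`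
and `ν = μ₀ − Σ_{k≥1}((a_k cos)⁻ + (b_k sin)⁻)` is non-negative, then
`W₂²(μ₀, μ₁) ≤ Σ_{k≥1} (2π²/k²)(|a_k| + |b_k|)`. -/
theorem W2sq_circle_frequency_sensitivity (p₀ : ℝ → ℝ) (a b : ℕ → ℝ)
    (ha0 : a 0 = 0) (hb0 : b 0 = 0)
    (hsum : Summable (fun k => |a k| + |b k|))
    (hp₀ : ∀ θ, 0 ≤ p₀ θ)
    (μ₀ μ₁ : Measure ℝ)
    (hμ₀ : μ₀ = (volume.restrict (Ico 0 (2 * π))).withDensity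
      (fun θ => ENNReal.ofReal (p₀ θ)))
    (hμ₁ : μ₁ = (volume.restrict (Ico 0 (2 * π))).withDensity
      (fun θ => ENNReal.ofReal (p₀ θ +
        ∑' k : ℕ, (a k * Real.cos (k * θ) + b k * Real.sin (k * θ)))))
    [IsProbabilityMeasure μ₀] [IsProbabilityMeasure μ₁]
    (hν : ∀ θ, 0 ≤ p₀ θ -
      ∑' k : ℕ, (max (-(a k * Real.cos (k * θ))) 0 + max (-(b k * Real.sin (k * θ))) 0)) :
    W2sqCircle μ₀ μ₁ ≤
      ENNReal.ofReal (∑' k : ℕ, 2 * π ^ 2 / (k : ℝ) ^ 2 * (|a k| + |b k|)) :=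
  W2sq_circle_frequency_sensitivity_general p₀ a b ha0 hsum μ₀ μ₁ hμ₀ hμ₁ hν
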